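/- arXiv:1510.00452 — 2 statements merged into one kernel-verified Lean document; each statement's English description precedes it below -/
import Mathlib

section
/- Weighted test sets (Theorem 3.1): for any vector r ∈ ℝⁿ with r_j > 0 for all j, the weighted minimax value satisfies: min over g ∈ [−1,1]ⁿ of sup over z ∈ Z of (1/n)·Σ_{j=1}^n r_j·ℓ(z_j, g_j) = (1/2)·inf over σ ∈ ℝᵖ with σ ≥ 0 of [−bᵀσ + (1/n)·Σ_{j=1}^n r_j·Ψ(x_jᵀσ / r_j)]. -/
open scoped BigOperators

noncomputable def Psi (lp lm Γinv : ℝ → ℝ) (m : ℝ) : ℝ :=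
  if m ≤ lm (-1) - lp (-1) then -m + 2 * lm (-1)
  else if m < lm 1 - lp 1 then lp (Γinv m) + lm (Γinv m)
  else m + 2 * lp 1

def ZSet (p n : ℕ) (F : Fin p → Fin n → ℝ) (b : Fin p → ℝ) : Set (Fin n → ℝ) :=
  {z | (∀ j, z j ∈ Set.Icc (-1:ℝ) 1) ∧ ∀ i, b i ≤ (1 / (n : ℝ)) * ∑ j, F i j * z j}

/-!
Since `2 ℓ(z, g) = ℓ₊(g) + ℓ₋(g) - z Γ(g)`, the maximum over `z ∈ [-1, 1]` of `2 ℓ(z, g) + z m`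
is `ℓ₊(g) + ℓ₋(g) + |m - Γ(g)|`, and `Ψ(m)` is the minimum of this over `g`, attained at `Γ⁻¹(m)`
clamped to `[-1, 1]`. Given `σ ≥ 0`, predicting with these minimisers for `m = x_jᵀσ / r_j` and
using `(1/n) F z ≥ b` bounds the minimax value by half the dual objective at `σ`.
Conversely, for fixed `g` the weighted loss is affine in `z`, so its supremum over `Z` is a linear
program over a box; separating the compact convex image of the box from the nonnegative orthant
gives its dual, a `σ ≥ 0` with `-bᵀσ + Σ_j |a_j + (σᵀF)_j / n|` close to the supremum, and the
bound `Ψ(m) ≤ ℓ₊(g) + ℓ₋(g) + |m - Γ(g)|` turns this into a dual objective value at `2σ`.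
-/

open Matrix Set

theorem Real.sInf_eq_sInf_of_forall_exists_le_add {S T : Set ℝ}
    (hTS : ∀ t ∈ T, ∃ s ∈ S, s ≤ t) (hST : ∀ s ∈ S, ∀ ε > 0, ∃ t ∈ T, t ≤ s + ε) :
    sInf S = sInf T := by
  -- `S` and `T` are bounded below together, and `sInf` of an unbounded set of reals is `0`.
  rcases S.eq_empty_or_nonempty with rfl | hS
  · rw [show T = ∅ from Set.eq_empty_of_forall_notMem fun t ht => by simpa using hTS t ht]
  obtain ⟨t₀, ht₀, -⟩ := hST _ hS.some_mem 1 one_pos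
  have hbdd : BddBelow S ↔ BddBelow T := by
    constructor
    · rintro ⟨m, hm⟩
      exact ⟨m, fun t ht => let ⟨s, hs, hst⟩ := hTS t ht; (hm hs).trans hst⟩
    · rintro ⟨m, hm⟩
      refine ⟨m - 1, fun s hs => ?_⟩
      obtain ⟨t, ht, hts⟩ := hST s hs 1 one_pos
      linarith [hm ht]
  by_cases hS_bdd : BddBelow S
  · have hT_bdd := hbdd.1 hS_bdd
    refine le_antisymm (le_csInf ⟨t₀, ht₀⟩ fun t ht => ?_) (le_csInf hS fun s hs => ?_)
    · obtain ⟨s, hs, hst⟩ := hTS t ht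
      exact (csInf_le hS_bdd hs).trans hst
    · refine le_of_forall_pos_le_add fun ε hε => ?_
      obtain ⟨t, ht, hts⟩ := hST s hs ε hε
      exact (csInf_le hT_bdd ht).trans hts
  · rw [Real.sInf_of_not_bddBelow hS_bdd, Real.sInf_of_not_bddBelow (hbdd.not.1 hS_bdd)]

lemma dotProduct_le_sum_abs_of_mem_Icc {ι : Type*} [Fintype ι] (w : ι → ℝ) {z : ι → ℝ}
    (hz : z ∈ Icc (-1 : ι → ℝ) 1) : w ⬝ᵥ z ≤ ∑ j, |w j| :=
  Finset.sum_le_sum fun j _ => (le_abs_self _).trans <| by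
    rw [abs_mul]
    exact mul_le_of_le_one_right (abs_nonneg _) (abs_le.2 ⟨hz.1 j, hz.2 j⟩)

lemma exists_mem_Icc_dotProduct_eq_sum_abs {ι : Type*} [Fintype ι] (w : ι → ℝ) :
    ∃ z ∈ Icc (-1 : ι → ℝ) 1, w ⬝ᵥ z = ∑ j, |w j| := by
  have hsign : ∀ s : SignType, (s : ℝ) ∈ Icc (-1) 1 := fun s => by cases s <;> norm_num
  exact ⟨fun j => SignType.sign (w j), ⟨fun j => (hsign _).1, fun j => (hsign _).2⟩,
    Finset.sum_congr rfl fun j _ => self_mul_sign (w j)⟩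

lemma ContinuousLinearMap.apply_prod_eq_dotProduct_add {κ : Type*} [Fintype κ] [DecidableEq κ]
    (f : (κ → ℝ) × ℝ →L[ℝ] ℝ) (y : κ → ℝ) (t : ℝ) :
    f (y, t) = (fun i => f (Pi.single i 1, 0)) ⬝ᵥ y + f (0, 1) * t := by
  have hy : (y, (0 : ℝ)) = ∑ i, y i • (Pi.single i (1 : ℝ), (0 : ℝ)) := by
    conv_lhs => rw [pi_eq_sum_univ' y]
    simp [Prod.ext_iff, Prod.fst_sum, Prod.snd_sum]
  have hsplit : (y, t) = (y, 0) + t • ((0 : κ → ℝ), (1 : ℝ)) := by ext <;> simp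
  rw [hsplit, map_add, hy, map_sum, map_smul, dotProduct]
  simp only [map_smul, smul_eq_mul, mul_comm]

section BoxLinearProgram

variable {ι κ : Type*} [Fintype ι] [Fintype κ] (A : Matrix κ ι ℝ) (c : κ → ℝ) (a : ι → ℝ) {T : ℝ}

theorem exists_lagrange_multipliers_of_forall_lt
    (hT : ∀ z ∈ Icc (-1 : ι → ℝ) 1, c ≤ A *ᵥ z → a ⬝ᵥ z < T) :
    ∃ μ : κ → ℝ, 0 ≤ μ ∧ ∃ θ : ℝ, 0 ≤ θ ∧
      ∀ z ∈ Icc (-1 : ι → ℝ) 1, μ ⬝ᵥ (A *ᵥ z - c) + θ * (a ⬝ᵥ z - T) < 0 := by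
  classical
  set K := (fun z => (A *ᵥ z - c, a ⬝ᵥ z - T)) '' Icc (-1 : ι → ℝ) 1
  have hKconv : Convex ℝ K := by
    rintro _ ⟨x, hx, rfl⟩ _ ⟨y, hy, rfl⟩ s t hs ht hst
    refine ⟨s • x + t • y, convex_Icc _ _ hx hy hs ht hst, ?_⟩
    have hc_comb : c = s • c + t • c := by rw [← add_smul, hst, one_smul]
    have hT_comb : T = s * T + t * T := by rw [← add_mul, hst, one_mul]
    refine Prod.ext ?_ ?_
    · simp only [mulVec_add, mulVec_smul, Prod.fst_add, Prod.smul_fst, smul_sub]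
      nth_rewrite 1 [hc_comb]
      abel
    · simp only [dotProduct_add, dotProduct_smul, Prod.snd_add, Prod.smul_snd, smul_eq_mul]
      nth_rewrite 1 [hT_comb]
      ring
  have hdisj : Disjoint K (ProperCone.positive ℝ ((κ → ℝ) × ℝ)) := by
    refine Set.disjoint_left.2 ?_
    rintro _ ⟨z, hz, rfl⟩ ⟨hfeas, hobj⟩
    exact absurd (hT z hz (sub_nonneg.1 hfeas)) (not_lt.2 (sub_nonneg.1 hobj))
  obtain ⟨f, hfC, hfK⟩ := (ProperCone.positive ℝ _).hyperplane_separation hKconv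
    (isCompact_Icc.image (by fun_prop)) hdisj
  refine ⟨fun i => f (Pi.single i 1, 0), fun i => hfC _ ⟨Pi.single_nonneg.2 zero_le_one, le_rfl⟩,
    f (0, 1), hfC _ ⟨le_rfl, zero_le_one⟩, fun z hz => ?_⟩
  rw [← f.apply_prod_eq_dotProduct_add]
  exact hfK _ ⟨z, hz, rfl⟩

theorem exists_nonneg_dual_le_of_forall_lt
    (hfeas : ∃ z ∈ Icc (-1 : ι → ℝ) 1, c ≤ A *ᵥ z)
    (hT : ∀ z ∈ Icc (-1 : ι → ℝ) 1, c ≤ A *ᵥ z → a ⬝ᵥ z < T) :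
    ∃ σ : κ → ℝ, 0 ≤ σ ∧ -(σ ⬝ᵥ c) + ∑ j, |(a + σ ᵥ* A) j| ≤ T := by
  obtain ⟨μ, hμ, θ, hθ, hneg⟩ := exists_lagrange_multipliers_of_forall_lt A c a hT
  obtain ⟨z₀, hz₀, hz₀c⟩ := hfeas
  have hθpos : 0 < θ := by
    refine hθ.lt_of_ne fun h => ?_
    have := hneg z₀ hz₀
    rw [← h, zero_mul, add_zero] at this
    exact absurd this (not_lt.2 (dotProduct_nonneg_of_nonneg hμ (sub_nonneg.2 hz₀c)))
  refine ⟨θ⁻¹ • μ, smul_nonneg (inv_nonneg.2 hθ) hμ, ?_⟩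
  obtain ⟨z, hz, hzabs⟩ := exists_mem_Icc_dotProduct_eq_sum_abs (a + (θ⁻¹ • μ) ᵥ* A)
  have hscaled : θ⁻¹ * (μ ⬝ᵥ (A *ᵥ z - c)) + (a ⬝ᵥ z - T) < 0 := by
    have := mul_lt_mul_of_pos_left (hneg z hz) (inv_pos.2 hθpos)
    rwa [mul_zero, mul_add, ← mul_assoc, inv_mul_cancel₀ hθpos.ne', one_mul] at this
  rw [← hzabs, add_dotProduct, ← dotProduct_mulVec, smul_dotProduct, smul_dotProduct,
    smul_eq_mul, smul_eq_mul]
  rw [dotProduct_sub] at hscaled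
  linarith

end BoxLinearProgram

section Psi

variable {lp lm Γinv : ℝ → ℝ}

lemma Psi_le_add_abs_sub (hlpm : AntitoneOn lp (Icc (-1) 1)) (hlmm : MonotoneOn lm (Icc (-1) 1))
    (hGinvMem : ∀ m ∈ Icc (lm (-1) - lp (-1)) (lm 1 - lp 1), Γinv m ∈ Icc (-1:ℝ) 1)
    (hGinvRight : ∀ m ∈ Icc (lm (-1) - lp (-1)) (lm 1 - lp 1), lm (Γinv m) - lp (Γinv m) = m)
    (m : ℝ) {g : ℝ} (hg : g ∈ Icc (-1:ℝ) 1) :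
    Psi lp lm Γinv m ≤ lp g + lm g + |m - (lm g - lp g)| := by
  have hneg_one : (-1 : ℝ) ∈ Icc (-1 : ℝ) 1 := by norm_num
  have hone : (1 : ℝ) ∈ Icc (-1 : ℝ) 1 := by norm_num
  have h₁ := le_abs_self (m - (lm g - lp g))
  have h₂ := neg_abs_le (m - (lm g - lp g))
  unfold Psi
  split_ifs with hleft hright
  · linarith [hlmm hneg_one hg hg.1, hlpm hneg_one hg hg.1]
  · have hm : m ∈ Icc (lm (-1) - lp (-1)) (lm 1 - lp 1) := ⟨(not_le.1 hleft).le, hright.le⟩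
    have hΓ := hGinvRight m hm
    rcases le_total g (Γinv m) with hgm | hgm
    · linarith [hlpm hg (hGinvMem m hm) hgm]
    · linarith [hlmm (hGinvMem m hm) hg hgm]
  · linarith [hlpm hg hone hg.2, hlmm hg hone hg.2]

lemma exists_mem_Icc_forall_loss_le_Psi_sub
    (hGinvMem : ∀ m ∈ Icc (lm (-1) - lp (-1)) (lm 1 - lp 1), Γinv m ∈ Icc (-1:ℝ) 1)
    (hGinvRight : ∀ m ∈ Icc (lm (-1) - lp (-1)) (lm 1 - lp 1), lm (Γinv m) - lp (Γinv m) = m)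
    (m : ℝ) :
    ∃ g ∈ Icc (-1:ℝ) 1, ∀ z ∈ Icc (-1:ℝ) 1,
      (1 + z) * lp g + (1 - z) * lm g ≤ Psi lp lm Γinv m - z * m := by
  unfold Psi
  split_ifs with hleft hright
  · exact ⟨-1, by norm_num, fun z hz => by nlinarith [hz.1]⟩
  · have hm : m ∈ Icc (lm (-1) - lp (-1)) (lm 1 - lp 1) := ⟨(not_le.1 hleft).le, hright.le⟩
    refine ⟨Γinv m, hGinvMem m hm, fun z _ => le_of_eq ?_⟩
    linear_combination (-z) * hGinvRight m hm
  · exact ⟨1, by norm_num, fun z hz => by nlinarith [hz.2, not_lt.1 hright]⟩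

lemma mul_Psi_two_mul_div_le (hlpm : AntitoneOn lp (Icc (-1) 1))
    (hlmm : MonotoneOn lm (Icc (-1) 1))
    (hGinvMem : ∀ m ∈ Icc (lm (-1) - lp (-1)) (lm 1 - lp 1), Γinv m ∈ Icc (-1:ℝ) 1)
    (hGinvRight : ∀ m ∈ Icc (lm (-1) - lp (-1)) (lm 1 - lp 1), lm (Γinv m) - lp (Γinv m) = m)
    {c r : ℝ} (hc : 0 ≤ c) (hr : 0 < r) (u : ℝ) {g : ℝ} (hg : g ∈ Icc (-1:ℝ) 1) :
    c * (r * Psi lp lm Γinv (2 * u / r)) ≤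
      c * (r * (lp g + lm g)) + 2 * |-(c * r * (lm g - lp g)) / 2 + c * u| := by
  have hΨ := mul_le_mul_of_nonneg_left
    (Psi_le_add_abs_sub hlpm hlmm hGinvMem hGinvRight (2 * u / r) hg) hr.le
  have habs : r * |2 * u / r - (lm g - lp g)| = |2 * u - r * (lm g - lp g)| := by
    rw [← abs_of_pos hr, ← abs_mul, abs_of_pos hr, mul_sub, mul_div_cancel₀ _ hr.ne']
  have hslack : 2 * |-(c * r * (lm g - lp g)) / 2 + c * u| = c * |2 * u - r * (lm g - lp g)| := by
    rw [← abs_two, ← abs_mul, ← abs_of_nonneg hc, ← abs_mul, abs_of_nonneg hc]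
    congr 1
    ring
  rw [mul_add, habs] at hΨ
  rw [hslack, ← mul_add]
  exact mul_le_mul_of_nonneg_left hΨ hc

end Psi

lemma mem_ZSet_iff {p n : ℕ} {F : Matrix (Fin p) (Fin n) ℝ} {b : Fin p → ℝ} {z : Fin n → ℝ} :
    z ∈ ZSet p n F b ↔
      z ∈ Icc (-1 : Fin n → ℝ) 1 ∧ b ≤ ((1 / (n : ℝ)) • F) *ᵥ z := by
  rw [smul_mulVec]
  simp only [ZSet, mem_ofPred_eq, mem_Icc, Pi.le_def, forall_and, Pi.smul_apply, smul_eq_mul,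
    mulVec, dotProduct, Pi.neg_apply, Pi.one_apply]

lemma weighted_loss_eq {ι : Type*} [Fintype ι] (c : ℝ) (r g z : ι → ℝ) (lp lm : ℝ → ℝ) :
    c * ∑ j, r j * ((1 + z j) / 2 * lp (g j) + (1 - z j) / 2 * lm (g j)) =
      c * (∑ j, r j * (lp (g j) + lm (g j))) / 2 +
        (fun j => -(c * r j * (lm (g j) - lp (g j))) / 2) ⬝ᵥ z := by
  simp only [dotProduct, Finset.mul_sum, Finset.sum_div, ← Finset.sum_add_distrib]
  exact Finset.sum_congr rfl fun j _ => by ring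

lemma bddAbove_weighted_loss {p n : ℕ} (F : Matrix (Fin p) (Fin n) ℝ) (b : Fin p → ℝ)
    (r g : Fin n → ℝ) (lp lm : ℝ → ℝ) :
    BddAbove {w | ∃ z ∈ ZSet p n F b,
      w = (1 / (n : ℝ)) * ∑ j, r j * ((1 + z j) / 2 * lp (g j) + (1 - z j) / 2 * lm (g j))} := by
  refine ⟨_, fun _ ⟨z, hz, hw⟩ => hw ▸ (weighted_loss_eq _ r g z lp lm).trans_le <|
    add_le_add le_rfl (dotProduct_le_sum_abs_of_mem_Icc _ (mem_ZSet_iff.1 hz).1)⟩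

section WeightedMinimax

variable {p n : ℕ} (F : Matrix (Fin p) (Fin n) ℝ) (b : Fin p → ℝ) {r : Fin n → ℝ}
  {lp lm Γinv : ℝ → ℝ}

theorem exists_forall_weighted_loss_le_half_dual (hr : ∀ j, 0 < r j)
    (hGinvMem : ∀ m ∈ Icc (lm (-1) - lp (-1)) (lm 1 - lp 1), Γinv m ∈ Icc (-1:ℝ) 1)
    (hGinvRight : ∀ m ∈ Icc (lm (-1) - lp (-1)) (lm 1 - lp 1), lm (Γinv m) - lp (Γinv m) = m)
    {σ : Fin p → ℝ} (hσ : 0 ≤ σ) :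
    ∃ g : Fin n → ℝ, (∀ j, g j ∈ Icc (-1:ℝ) 1) ∧ ∀ z ∈ ZSet p n F b,
      (1 / (n : ℝ)) * ∑ j, r j * ((1 + z j) / 2 * lp (g j) + (1 - z j) / 2 * lm (g j)) ≤
        1 / 2 * (-(b ⬝ᵥ σ) + (1 / (n : ℝ)) * ∑ j, r j * Psi lp lm Γinv ((σ ᵥ* F) j / r j)) := by
  choose g hg hgle using fun j =>
    exists_mem_Icc_forall_loss_le_Psi_sub hGinvMem hGinvRight ((σ ᵥ* F) j / r j)
  refine ⟨g, hg, fun z hz => ?_⟩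
  obtain ⟨hzbox, hzF⟩ := mem_ZSet_iff.1 hz
  have hterm : ∀ j, r j * ((1 + z j) / 2 * lp (g j) + (1 - z j) / 2 * lm (g j)) ≤
      (r j * Psi lp lm Γinv ((σ ᵥ* F) j / r j) - (σ ᵥ* F) j * z j) / 2 := by
    intro j
    have h := mul_le_mul_of_nonneg_left (hgle j (z j) ⟨hzbox.1 j, hzbox.2 j⟩) (hr j).le
    rw [mul_sub, ← mul_assoc, mul_comm (r j) (z j), mul_assoc, mul_div_cancel₀ _ (hr j).ne'] at h
    linarith
  have hconstr : b ⬝ᵥ σ ≤ 1 / (n : ℝ) * ((σ ᵥ* F) ⬝ᵥ z) := by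
    rw [dotProduct_comm, ← dotProduct_mulVec, ← smul_eq_mul, ← dotProduct_smul, ← smul_mulVec]
    exact dotProduct_le_dotProduct_of_nonneg_left hzF hσ
  calc (1 / (n : ℝ)) * ∑ j, r j * ((1 + z j) / 2 * lp (g j) + (1 - z j) / 2 * lm (g j))
      ≤ (1 / (n : ℝ)) * ∑ j, (r j * Psi lp lm Γinv ((σ ᵥ* F) j / r j) - (σ ᵥ* F) j * z j) / 2 :=
        by gcongr with j; exact hterm j
    _ = 1 / 2 * (-(1 / (n : ℝ) * ((σ ᵥ* F) ⬝ᵥ z)) +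
          (1 / (n : ℝ)) * ∑ j, r j * Psi lp lm Γinv ((σ ᵥ* F) j / r j)) := by
        rw [← Finset.sum_div, Finset.sum_sub_distrib, dotProduct]
        simp only [mul_comm ((σ ᵥ* F) _)]
        ring
    _ ≤ _ := by linarith

theorem exists_half_dual_le_of_forall_weighted_loss_lt (hr : ∀ j, 0 < r j)
    (hlpm : AntitoneOn lp (Icc (-1) 1)) (hlmm : MonotoneOn lm (Icc (-1) 1))
    (hGinvMem : ∀ m ∈ Icc (lm (-1) - lp (-1)) (lm 1 - lp 1), Γinv m ∈ Icc (-1:ℝ) 1)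
    (hGinvRight : ∀ m ∈ Icc (lm (-1) - lp (-1)) (lm 1 - lp 1), lm (Γinv m) - lp (Γinv m) = m)
    (hZ : (ZSet p n F b).Nonempty) {g : Fin n → ℝ} (hg : ∀ j, g j ∈ Icc (-1:ℝ) 1) {T : ℝ}
    (hT : ∀ z ∈ ZSet p n F b,
      (1 / (n : ℝ)) * ∑ j, r j * ((1 + z j) / 2 * lp (g j) + (1 - z j) / 2 * lm (g j)) < T) :
    ∃ σ : Fin p → ℝ, 0 ≤ σ ∧
      1 / 2 * (-(b ⬝ᵥ σ) + (1 / (n : ℝ)) * ∑ j, r j * Psi lp lm Γinv ((σ ᵥ* F) j / r j)) ≤ T := by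
  set c₀ := (1 / (n : ℝ)) * (∑ j, r j * (lp (g j) + lm (g j))) / 2
  set a : Fin n → ℝ := fun j => -((1 / (n : ℝ)) * r j * (lm (g j) - lp (g j))) / 2
  obtain ⟨z₀, hz₀⟩ := hZ
  obtain ⟨σ, hσ, hdual⟩ := exists_nonneg_dual_le_of_forall_lt _ b a (T := T - c₀)
    ⟨z₀, mem_ZSet_iff.1 hz₀⟩ fun z hz hzF => by
      have := hT z (mem_ZSet_iff.2 ⟨hz, hzF⟩)
      rw [weighted_loss_eq] at this
      exact lt_sub_iff_add_lt'.2 this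
  refine ⟨(2 : ℝ) • σ, smul_nonneg zero_le_two hσ, ?_⟩
  have hterm : ∀ j, 1 / (n : ℝ) * (r j * Psi lp lm Γinv ((((2 : ℝ) • σ) ᵥ* F) j / r j)) ≤
      1 / (n : ℝ) * (r j * (lp (g j) + lm (g j))) + 2 * |(a + σ ᵥ* ((1 / (n : ℝ)) • F)) j| := by
    intro j
    rw [smul_vecMul, vecMul_smul]
    exact mul_Psi_two_mul_div_le hlpm hlmm hGinvMem hGinvRight (by positivity) (hr j) _ (hg j)
  have hsum := Finset.sum_le_sum fun j (_ : j ∈ Finset.univ) => hterm j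
  rw [Finset.sum_add_distrib, ← Finset.mul_sum, ← Finset.mul_sum, ← Finset.mul_sum] at hsum
  have hc₀ : 1 / (n : ℝ) * ∑ j, r j * (lp (g j) + lm (g j)) = 2 * c₀ := by
    simp only [c₀]; ring
  rw [dotProduct_smul, smul_eq_mul, dotProduct_comm]
  linarith

end WeightedMinimax

theorem stmt_11_general (p n : ℕ)
    (F : Fin p → Fin n → ℝ) (b : Fin p → ℝ)
    (lp lm Γinv : ℝ → ℝ)
    (hlpm : AntitoneOn lp (Set.Icc (-1) 1))
    (hlmm : MonotoneOn lm (Set.Icc (-1) 1))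
    (hGinvMem : ∀ m ∈ Set.Icc (lm (-1) - lp (-1)) (lm 1 - lp 1), Γinv m ∈ Set.Icc (-1:ℝ) 1)
    (hGinvRight : ∀ m ∈ Set.Icc (lm (-1) - lp (-1)) (lm 1 - lp 1), lm (Γinv m) - lp (Γinv m) = m)
    (hZ : (ZSet p n F b).Nonempty)
    (r : Fin n → ℝ) (hr : ∀ j, 0 < r j) :
    sInf {v : ℝ | ∃ g : Fin n → ℝ, (∀ j, g j ∈ Set.Icc (-1:ℝ) 1) ∧
        v = sSup {w : ℝ | ∃ z ∈ ZSet p n F b,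
          w = (1 / (n : ℝ)) * ∑ j, r j * ((1 + z j) / 2 * lp (g j) + (1 - z j) / 2 * lm (g j))}} =
      (1 / 2) * sInf {v : ℝ | ∃ σ : Fin p → ℝ, (∀ i, 0 ≤ σ i) ∧
        v = -(∑ i, b i * σ i) +
          (1 / (n : ℝ)) * ∑ j, r j * Psi lp lm Γinv ((∑ i, σ i * F i j) / r j)} := by
  rw [← smul_eq_mul, ← Real.sInf_smul_of_nonneg (by norm_num)]
  refine Real.sInf_eq_sInf_of_forall_exists_le_add ?_ ?_
  · rintro _ ⟨_, ⟨σ, hσ, rfl⟩, rfl⟩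
    obtain ⟨g, hg, hle⟩ :=
      exists_forall_weighted_loss_le_half_dual F b hr hGinvMem hGinvRight (σ := σ) hσ
    obtain ⟨z₀, hz₀⟩ := hZ
    exact ⟨_, ⟨g, hg, rfl⟩, csSup_le ⟨_, z₀, hz₀, rfl⟩ fun _ ⟨z, hz, hw⟩ => hw ▸ hle z hz⟩
  · rintro _ ⟨g, hg, rfl⟩ ε hε
    obtain ⟨σ, hσ, hle⟩ :=
      exists_half_dual_le_of_forall_weighted_loss_lt F b hr hlpm hlmm hGinvMem hGinvRight hZ hg
        fun z hz => (le_csSup (bddAbove_weighted_loss F b r g lp lm) ⟨z, hz, rfl⟩).trans_lt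
          (lt_add_of_pos_right _ hε)
    exact ⟨_, ⟨_, ⟨σ, hσ, rfl⟩, rfl⟩, hle⟩

theorem stmt_11 (p n : ℕ) (hp : 0 < p) (hn : 0 < n)
    (F : Fin p → Fin n → ℝ) (hF : ∀ i j, F i j ∈ Set.Icc (-1:ℝ) 1) (b : Fin p → ℝ)
    (lp lm lp' lm' lp'' lm'' Γinv : ℝ → ℝ)
    (hlpc : ContinuousOn lp (Set.Icc (-1) 1))
    (hlmc : ContinuousOn lm (Set.Icc (-1) 1))
    (hlpd : ∀ x ∈ Set.Ioo (-1:ℝ) 1, HasDerivAt lp (lp' x) x)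
    (hlmd : ∀ x ∈ Set.Ioo (-1:ℝ) 1, HasDerivAt lm (lm' x) x)
    (hlpd2 : ∀ x ∈ Set.Ioo (-1:ℝ) 1, HasDerivAt lp' (lp'' x) x)
    (hlmd2 : ∀ x ∈ Set.Ioo (-1:ℝ) 1, HasDerivAt lm' (lm'' x) x)
    (hlpm : AntitoneOn lp (Set.Icc (-1) 1))
    (hlmm : MonotoneOn lm (Set.Icc (-1) 1))
    (hslope : ∀ x ∈ Set.Ioo (-1:ℝ) 1, 0 < lm' x - lp' x)
    (hGinvMem : ∀ m ∈ Set.Icc (lm (-1) - lp (-1)) (lm 1 - lp 1), Γinv m ∈ Set.Icc (-1:ℝ) 1)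
    (hGinvRight : ∀ m ∈ Set.Icc (lm (-1) - lp (-1)) (lm 1 - lp 1), lm (Γinv m) - lp (Γinv m) = m)
    (hGinvLeft : ∀ g ∈ Set.Icc (-1:ℝ) 1, Γinv (lm g - lp g) = g)
    (hZ : (ZSet p n F b).Nonempty)
    (r : Fin n → ℝ) (hr : ∀ j, 0 < r j) :
    sInf {v : ℝ | ∃ g : Fin n → ℝ, (∀ j, g j ∈ Set.Icc (-1:ℝ) 1) ∧
        v = sSup {w : ℝ | ∃ z ∈ ZSet p n F b,
          w = (1 / (n : ℝ)) * ∑ j, r j * ((1 + z j) / 2 * lp (g j) + (1 - z j) / 2 * lm (g j))}} =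
      (1 / 2) * sInf {v : ℝ | ∃ σ : Fin p → ℝ, (∀ i, 0 ≤ σ i) ∧
        v = -(∑ i, b i * σ i) +
          (1 / (n : ℝ)) * ∑ j, r j * Psi lp lm Γinv ((∑ i, σ i * F i j) / r j)} :=
  stmt_11_general p n F b lp lm Γinv hlpm hlmm hGinvMem hGinvRight hZ r hr
end

section
/- Two-sided (uniform-convergence) constraints (Theorem 3.2): for ε ≥ 0, with Z_ε = {z ∈ [−1,1]ⁿ : ‖(1/n)·F·z − b‖_∞ ≤ ε} nonempty, min over g ∈ [−1,1]ⁿ of sup over z ∈ Z_ε of ℓ(z,g) = (1/2)·inf over σ ∈ ℝᵖ of [−bᵀσ + (1/n)·Σ_{j=1}^n Ψ(x_jᵀσ) + ε·‖σ‖₁]; that is, the L∞ bound on b turns the dual problem into an L¹-regularized version of the original slack minimization over all of ℝᵖ. -/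
open scoped BigOperators

noncomputable def lossV (lp lm : ℝ → ℝ) (n : ℕ) (z g : Fin n → ℝ) : ℝ :=
  (1 / (n : ℝ)) * ∑ j, ((1 + z j) / 2 * lp (g j) + (1 - z j) / 2 * lm (g j))

def ZeSet (p n : ℕ) (F : Fin p → Fin n → ℝ) (b : Fin p → ℝ) (ε : ℝ) : Set (Fin n → ℝ) :=
  {z | (∀ j, z j ∈ Set.Icc (-1:ℝ) 1) ∧ ∀ i, |(1 / (n : ℝ)) * (∑ j, F i j * z j) - b i| ≤ ε}

/-!
For fixed `g` the loss is affine in `z`, so the inner supremum over `Z_ε` is a linear program.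
Separating the image of the cube `[-1,1]ⁿ` under `z ↦ (Fz/n - b, objective)` from
`{|w_i| ≤ ε} × [t, ∞)` gives its dual: the infimum over `σ` of
`-bᵀσ + (1/n) Σ_j [ℓ₊(g_j) + ℓ₋(g_j) + |x_jᵀσ - Γ(g_j)|] + ε‖σ‖₁`.
The infimum over `g` then commutes with the one over `σ` and acts coordinatewise, and
`min_g ℓ₊(g) + ℓ₋(g) + |m - Γ(g)| = Ψ(m)` by monotonicity of `ℓ₊` and `ℓ₋` alone.
-/

lemma sum_mul_le_mul_sum_abs {ι : Type*} [Fintype ι] {c : ℝ} {w : ι → ℝ} (hw : ∀ i, |w i| ≤ c)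
    (a : ι → ℝ) : ∑ i, a i * w i ≤ c * ∑ i, |a i| := by
  rw [Finset.mul_sum]
  refine Finset.sum_le_sum fun i _ => ?_
  calc a i * w i ≤ |a i| * |w i| := by rw [← abs_mul]; exact le_abs_self _
    _ ≤ c * |a i| := by rw [mul_comm]; exact mul_le_mul_of_nonneg_right (hw i) (abs_nonneg _)

lemma exists_abs_le_sum_mul_eq {ι : Type*} [Fintype ι] {c : ℝ} (hc : 0 ≤ c) (a : ι → ℝ) :
    ∃ w : ι → ℝ, (∀ i, |w i| ≤ c) ∧ ∑ i, a i * w i = c * ∑ i, |a i| := by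
  refine ⟨fun i => if 0 ≤ a i then c else -c,
    fun i => by dsimp only; split_ifs <;> simp [abs_of_nonneg hc], ?_⟩
  rw [Finset.mul_sum]
  refine Finset.sum_congr rfl fun i _ => ?_
  dsimp only
  split_ifs with h
  · rw [abs_of_nonneg h, mul_comm]
  · rw [abs_of_neg (not_le.1 h)]; ring

lemma exists_penalty_multiplier {ι : Type*} [Fintype ι] {K : Set ((ι → ℝ) × ℝ)} (hKc : Convex ℝ K)
    (hK : IsCompact K) {ε t : ℝ} (hε : 0 ≤ ε) {x₀ : (ι → ℝ) × ℝ} (hx₀ : x₀ ∈ K)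
    (hx₀ε : ∀ i, |x₀.1 i| ≤ ε) (hlt : ∀ x ∈ K, (∀ i, |x.1 i| ≤ ε) → x.2 < t) :
    ∃ μ : ι → ℝ, ∀ x ∈ K, x.2 + ∑ i, μ i * x.1 i + ε * ∑ i, |μ i| < t := by
  classical
  set D : Set ((ι → ℝ) × ℝ) := (Set.univ.pi fun _ => Set.Icc (-ε) ε) ×ˢ Set.Ici t
  have hD : ∀ w s, (w, s) ∈ D ↔ (∀ i, |w i| ≤ ε) ∧ t ≤ s := fun w s => by
    simp only [D, Set.mem_prod, Set.mem_univ_pi, Set.mem_Icc, Set.mem_Ici, abs_le]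
  obtain ⟨f, u, v, hfu, huv, hfv⟩ := geometric_hahn_banach_compact_closed hKc hK
    ((convex_pi fun _ _ => convex_Icc _ _).prod (convex_Ici t))
    ((isClosed_set_pi fun _ _ => isClosed_Icc).prod isClosed_Ici)
    (Set.disjoint_left.2 fun x hxK hxD => ((hD x.1 x.2).1 hxD).2.not_gt
      (hlt x hxK ((hD _ _).1 hxD).1))
  set σ : ι → ℝ := fun i => f ((fun j => if i = j then 1 else 0), 0)
  set τ := f (0, 1)
  have hf : ∀ x : (ι → ℝ) × ℝ, f x = ∑ i, σ i * x.1 i + τ * x.2 := by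
    intro x
    have h1 : f (x.1, 0) = ∑ i, σ i * x.1 i := by
      simpa [σ, mul_comm] using
        LinearMap.pi_apply_eq_sum_univ ((f : _ →ₗ[ℝ] ℝ).comp (LinearMap.inl ℝ _ ℝ)) x.1
    have h2 : f (0, x.2) = τ * x.2 := by
      rw [show ((0 : ι → ℝ), x.2) = x.2 • ((0 : ι → ℝ), (1:ℝ)) by simp, map_smul, smul_eq_mul,
        mul_comm]
    rw [← h1, ← h2, ← map_add, Prod.mk_add_mk, add_zero, zero_add]
  have hτ : 0 < τ := by
    have h1 := hfu x₀ hx₀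
    have h2 := hfv (x₀.1, t) ((hD _ _).2 ⟨hx₀ε, le_rfl⟩)
    have h3 := hlt x₀ hx₀ hx₀ε
    rw [hf] at h1 h2
    nlinarith
  obtain ⟨w, hw, hwσ⟩ := exists_abs_le_sum_mul_eq hε σ
  refine ⟨fun i => σ i / τ, fun x hx => ?_⟩
  have h1 := hfu x hx
  have h2 := hfv (-w, t) ((hD _ _).2 ⟨fun i => by simpa using hw i, le_rfl⟩)
  rw [hf] at h1 h2
  simp only [Pi.neg_apply, mul_neg, Finset.sum_neg_distrib, hwσ] at h2
  simp only [div_mul_eq_mul_div, abs_div, abs_of_pos hτ, ← Finset.sum_div]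
  rw [← sub_pos]
  field_simp
  linarith

/-- With `ψ j = Ψ` this is the bracket of the theorem; with `ψ = lossPotential lp lm g` it is the
dual of the linear program `2 * worstCaseLoss F b ε lp lm g`. -/
noncomputable def dualObjective {p n : ℕ} (F : Fin p → Fin n → ℝ) (b : Fin p → ℝ) (ε : ℝ)
    (ψ : Fin n → ℝ → ℝ) (σ : Fin p → ℝ) : ℝ :=
  -(∑ i, b i * σ i) + (1 / (n : ℝ)) * (∑ j, ψ j (∑ i, σ i * F i j)) + ε * ∑ i, |σ i|

section LinearProgram

variable {p n : ℕ} (F : Fin p → Fin n → ℝ) (b : Fin p → ℝ) (ε : ℝ) (c a : Fin n → ℝ)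

lemma lagrangian_eq (z : Fin n → ℝ) (μ : Fin p → ℝ) :
    (1 / (n : ℝ)) * ∑ j, (c j - a j * z j) + ∑ i, μ i * ((1 / (n : ℝ)) * ∑ j, F i j * z j - b i) =
      (1 / (n : ℝ)) * ∑ j, (c j + (∑ i, μ i * F i j - a j) * z j) - ∑ i, b i * μ i := by
  have hswap : ∑ j, (∑ i, μ i * F i j) * z j = ∑ i, μ i * ∑ j, F i j * z j :=
    (Matrix.dotProduct_mulVec μ F z).symm
  have hsplit : ∑ j, (c j + (∑ i, μ i * F i j - a j) * z j) =
      ∑ j, (c j - a j * z j) + ∑ j, (∑ i, μ i * F i j) * z j := by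
    rw [← Finset.sum_add_distrib]
    exact Finset.sum_congr rfl fun j _ => by ring
  have hres : ∑ i, μ i * ((1 / (n : ℝ)) * ∑ j, F i j * z j - b i) =
      (1 / (n : ℝ)) * ∑ i, μ i * ∑ j, F i j * z j - ∑ i, b i * μ i := by
    rw [Finset.mul_sum, ← Finset.sum_sub_distrib]
    exact Finset.sum_congr rfl fun i _ => by ring
  rw [hres, hsplit, hswap]
  ring

lemma le_dualObjective {z : Fin n → ℝ} (hz : z ∈ ZeSet p n F b ε) (μ : Fin p → ℝ) :
    (1 / (n : ℝ)) * ∑ j, (c j - a j * z j) ≤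
      dualObjective F b ε (fun j m => c j + |m - a j|) μ := by
  have hres := sum_mul_le_mul_sum_abs (w := fun i => -((1 / (n : ℝ)) * ∑ j, F i j * z j - b i))
    (fun i => by rw [abs_neg]; exact hz.2 i) μ
  have hbox : ∑ j, (c j + (∑ i, μ i * F i j - a j) * z j) ≤
      ∑ j, (c j + |∑ i, μ i * F i j - a j|) := by
    have := sum_mul_le_mul_sum_abs (c := 1) (w := z) (fun j => abs_le.2 (hz.1 j))
      (fun j => ∑ i, μ i * F i j - a j)
    simp only [Finset.sum_add_distrib]
    linarith
  have hlag := lagrangian_eq F b c a z μ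
  simp only [mul_neg, Finset.sum_neg_distrib] at hres
  unfold dualObjective
  have := mul_le_mul_of_nonneg_left hbox (by positivity : (0 : ℝ) ≤ 1 / n)
  linarith

lemma exists_dualObjective_le (hZ : (ZeSet p n F b ε).Nonempty) (hε : 0 ≤ ε) {t : ℝ}
    (ht : ∀ z ∈ ZeSet p n F b ε, (1 / (n : ℝ)) * ∑ j, (c j - a j * z j) < t) :
    ∃ μ, dualObjective F b ε (fun j m => c j + |m - a j|) μ ≤ t := by
  set box : Set (Fin n → ℝ) := Set.univ.pi fun _ => Set.Icc (-1) 1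
  set φ : (Fin n → ℝ) → (Fin p → ℝ) × ℝ := fun z =>
    (fun i => (1 / (n : ℝ)) * ∑ j, F i j * z j - b i, (1 / (n : ℝ)) * ∑ j, (c j - a j * z j))
  have hconv : Convex ℝ (φ '' box) := by
    rintro _ ⟨z, hz, rfl⟩ _ ⟨z', hz', rfl⟩ α β hα hβ hαβ
    refine ⟨α • z + β • z', convex_pi (fun _ _ => convex_Icc _ _) hz hz' hα hβ hαβ, ?_⟩
    have hlin : ∀ G : Fin n → ℝ,
        ∑ j, G j * (α * z j + β * z' j) = α * ∑ j, G j * z j + β * ∑ j, G j * z' j := fun G => by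
      simp only [Finset.mul_sum, ← Finset.sum_add_distrib]
      exact Finset.sum_congr rfl fun j _ => by ring
    ext i
    · simp only [φ, Prod.smul_mk, Prod.mk_add_mk, Pi.add_apply, Pi.smul_apply, smul_eq_mul, hlin]
      linear_combination b i * hαβ
    · simp only [φ, Prod.smul_mk, Prod.mk_add_mk, Pi.add_apply, Pi.smul_apply, smul_eq_mul,
        Finset.sum_sub_distrib, hlin]
      linear_combination -(1 / (n : ℝ)) * (∑ j, c j) * hαβ
  obtain ⟨z₀, hz₀⟩ := hZ
  obtain ⟨μ, hμ⟩ := exists_penalty_multiplier hconv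
    ((isCompact_univ_pi fun _ => isCompact_Icc).image (by fun_prop)) hε
    (Set.mem_image_of_mem φ (Set.mem_univ_pi.2 hz₀.1)) hz₀.2
    (by rintro _ ⟨z, hz, rfl⟩ hzε; exact ht z ⟨Set.mem_univ_pi.1 hz, hzε⟩)
  obtain ⟨z, hz, hz_eq⟩ := exists_abs_le_sum_mul_eq zero_le_one fun j => ∑ i, μ i * F i j - a j
  refine ⟨μ, le_of_lt ?_⟩
  have := hμ (φ z) ⟨z, Set.mem_univ_pi.2 fun j => abs_le.1 (hz j), rfl⟩
  have hsum : ∑ j, (c j + |∑ i, μ i * F i j - a j|) =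
      ∑ j, (c j + (∑ i, μ i * F i j - a j) * z j) := by
    rw [Finset.sum_add_distrib, Finset.sum_add_distrib, hz_eq, one_mul]
  have := lagrangian_eq F b c a z μ
  unfold dualObjective
  rw [hsum]
  linarith

end LinearProgram

section Potential

variable {lp lm Γinv : ℝ → ℝ}

lemma Psi_le (hlpm : AntitoneOn lp (Set.Icc (-1) 1)) (hlmm : MonotoneOn lm (Set.Icc (-1) 1))
    (hGinvMem : ∀ m ∈ Set.Icc (lm (-1) - lp (-1)) (lm 1 - lp 1), Γinv m ∈ Set.Icc (-1:ℝ) 1)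
    (hGinvRight : ∀ m ∈ Set.Icc (lm (-1) - lp (-1)) (lm 1 - lp 1), lm (Γinv m) - lp (Γinv m) = m)
    (m : ℝ) {g : ℝ} (hg : g ∈ Set.Icc (-1:ℝ) 1) :
    Psi lp lm Γinv m ≤ lp g + lm g + |m - (lm g - lp g)| := by
  have hl : m - (lm g - lp g) ≤ |m - (lm g - lp g)| := le_abs_self _
  have hr : -(m - (lm g - lp g)) ≤ |m - (lm g - lp g)| := neg_le_abs _
  have hneg : (-1 : ℝ) ∈ Set.Icc (-1) 1 := by norm_num
  have hpos : (1 : ℝ) ∈ Set.Icc (-1) 1 := by norm_num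
  unfold Psi
  split_ifs with hlo hhi
  · linarith [hlmm hneg hg hg.1]
  · have hm : m ∈ Set.Icc (lm (-1) - lp (-1)) (lm 1 - lp 1) := ⟨(not_le.1 hlo).le, hhi.le⟩
    have hh := hGinvMem m hm
    have hΓ := hGinvRight m hm
    rcases le_total (Γinv m) g with hle | hle
    · linarith [hlmm hh hg hle]
    · linarith [hlpm hg hh hle]
  · linarith [hlpm hg hpos hg.2]

lemma exists_Psi_eq
    (hGinvMem : ∀ m ∈ Set.Icc (lm (-1) - lp (-1)) (lm 1 - lp 1), Γinv m ∈ Set.Icc (-1:ℝ) 1)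
    (hGinvRight : ∀ m ∈ Set.Icc (lm (-1) - lp (-1)) (lm 1 - lp 1), lm (Γinv m) - lp (Γinv m) = m)
    (m : ℝ) : ∃ g ∈ Set.Icc (-1:ℝ) 1, lp g + lm g + |m - (lm g - lp g)| = Psi lp lm Γinv m := by
  unfold Psi
  split_ifs with hlo hhi
  · refine ⟨-1, by norm_num, ?_⟩
    rw [abs_of_nonpos (by linarith)]
    ring
  · have hm : m ∈ Set.Icc (lm (-1) - lp (-1)) (lm 1 - lp 1) := ⟨(not_le.1 hlo).le, hhi.le⟩
    exact ⟨Γinv m, hGinvMem m hm, by rw [hGinvRight m hm, sub_self, abs_zero, add_zero]⟩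
  · refine ⟨1, by norm_num, ?_⟩
    rw [abs_of_nonneg (by linarith)]
    ring

end Potential

def lossPotential {n : ℕ} (lp lm : ℝ → ℝ) (g : Fin n → ℝ) (j : Fin n) (m : ℝ) : ℝ :=
  lp (g j) + lm (g j) + |m - (lm (g j) - lp (g j))|

noncomputable def worstCaseLoss {p n : ℕ} (F : Fin p → Fin n → ℝ) (b : Fin p → ℝ) (ε : ℝ)
    (lp lm : ℝ → ℝ) (g : Fin n → ℝ) : ℝ :=
  sSup {w : ℝ | ∃ z ∈ ZeSet p n F b ε, w = lossV lp lm n z g}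

section Loss

variable {p n : ℕ} {F : Fin p → Fin n → ℝ} {b : Fin p → ℝ} {ε : ℝ} {lp lm Γinv : ℝ → ℝ}

lemma two_mul_lossV (z g : Fin n → ℝ) :
    2 * lossV lp lm n z g =
      (1 / (n : ℝ)) * ∑ j, (lp (g j) + lm (g j) - (lm (g j) - lp (g j)) * z j) := by
  rw [lossV, mul_left_comm, Finset.mul_sum]
  congr 1
  exact Finset.sum_congr rfl fun j _ => by ring

lemma min_le_lossV (hn : 0 < n) (hlpm : AntitoneOn lp (Set.Icc (-1) 1))
    (hlmm : MonotoneOn lm (Set.Icc (-1) 1)) {z g : Fin n → ℝ}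
    (hz : ∀ j, z j ∈ Set.Icc (-1:ℝ) 1) (hg : ∀ j, g j ∈ Set.Icc (-1:ℝ) 1) :
    min (lp 1) (lm (-1)) ≤ lossV lp lm n z g := by
  have hterm : ∀ j,
      min (lp 1) (lm (-1)) ≤ (1 + z j) / 2 * lp (g j) + (1 - z j) / 2 * lm (g j) := by
    intro j
    have hp : min (lp 1) (lm (-1)) ≤ lp (g j) :=
      (min_le_left _ _).trans (hlpm (hg j) (by norm_num) (hg j).2)
    have hm : min (lp 1) (lm (-1)) ≤ lm (g j) :=
      (min_le_right _ _).trans (hlmm (by norm_num) (hg j) (hg j).1)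
    nlinarith [(hz j).1, (hz j).2]
  calc min (lp 1) (lm (-1)) = (1 / (n : ℝ)) * ∑ _j : Fin n, min (lp 1) (lm (-1)) := by
        rw [Finset.sum_const, Finset.card_univ, Fintype.card_fin, nsmul_eq_mul]
        field_simp
    _ ≤ lossV lp lm n z g := by
        unfold lossV
        gcongr with j
        exact hterm j

lemma two_mul_lossV_le_dualObjective {z : Fin n → ℝ} (hz : z ∈ ZeSet p n F b ε)
    (g : Fin n → ℝ) (σ : Fin p → ℝ) :
    2 * lossV lp lm n z g ≤ dualObjective F b ε (lossPotential lp lm g) σ := by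
  rw [two_mul_lossV]
  exact le_dualObjective F b ε _ _ hz σ

lemma lossV_le_worstCaseLoss {z : Fin n → ℝ} (hz : z ∈ ZeSet p n F b ε) (g : Fin n → ℝ) :
    lossV lp lm n z g ≤ worstCaseLoss F b ε lp lm g := by
  refine le_csSup ⟨dualObjective F b ε (lossPotential lp lm g) 0 / 2, ?_⟩ ⟨z, hz, rfl⟩
  rintro _ ⟨z', hz', rfl⟩
  linarith [two_mul_lossV_le_dualObjective (lp := lp) (lm := lm) hz' g 0]

lemma two_mul_worstCaseLoss_le (hZ : (ZeSet p n F b ε).Nonempty) (g : Fin n → ℝ)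
    (σ : Fin p → ℝ) :
    2 * worstCaseLoss F b ε lp lm g ≤ dualObjective F b ε (lossPotential lp lm g) σ := by
  obtain ⟨z₀, hz₀⟩ := hZ
  have : worstCaseLoss F b ε lp lm g ≤ dualObjective F b ε (lossPotential lp lm g) σ / 2 := by
    refine csSup_le ⟨_, z₀, hz₀, rfl⟩ ?_
    rintro _ ⟨z, hz, rfl⟩
    linarith [two_mul_lossV_le_dualObjective (lp := lp) (lm := lm) hz g σ]
  linarith

lemma exists_dualObjective_le_two_mul_worstCaseLoss_add (hZ : (ZeSet p n F b ε).Nonempty)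
    (hε : 0 ≤ ε) (g : Fin n → ℝ) {δ : ℝ} (hδ : 0 < δ) :
    ∃ σ, dualObjective F b ε (lossPotential lp lm g) σ ≤ 2 * worstCaseLoss F b ε lp lm g + δ :=
  exists_dualObjective_le F b ε _ _ hZ hε fun z hz => by
    rw [← two_mul_lossV]
    linarith [lossV_le_worstCaseLoss (lp := lp) (lm := lm) hz g]

lemma dualObjective_Psi_le (hlpm : AntitoneOn lp (Set.Icc (-1) 1))
    (hlmm : MonotoneOn lm (Set.Icc (-1) 1))
    (hGinvMem : ∀ m ∈ Set.Icc (lm (-1) - lp (-1)) (lm 1 - lp 1), Γinv m ∈ Set.Icc (-1:ℝ) 1)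
    (hGinvRight : ∀ m ∈ Set.Icc (lm (-1) - lp (-1)) (lm 1 - lp 1), lm (Γinv m) - lp (Γinv m) = m)
    {g : Fin n → ℝ} (hg : ∀ j, g j ∈ Set.Icc (-1:ℝ) 1) (σ : Fin p → ℝ) :
    dualObjective F b ε (fun _ => Psi lp lm Γinv) σ ≤
      dualObjective F b ε (lossPotential lp lm g) σ := by
  unfold dualObjective
  gcongr with j
  exact Psi_le hlpm hlmm hGinvMem hGinvRight _ (hg j)

lemma exists_dualObjective_lossPotential_eq
    (hGinvMem : ∀ m ∈ Set.Icc (lm (-1) - lp (-1)) (lm 1 - lp 1), Γinv m ∈ Set.Icc (-1:ℝ) 1)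
    (hGinvRight : ∀ m ∈ Set.Icc (lm (-1) - lp (-1)) (lm 1 - lp 1), lm (Γinv m) - lp (Γinv m) = m)
    (σ : Fin p → ℝ) : ∃ g : Fin n → ℝ, (∀ j, g j ∈ Set.Icc (-1:ℝ) 1) ∧
      dualObjective F b ε (lossPotential lp lm g) σ =
        dualObjective F b ε (fun _ => Psi lp lm Γinv) σ := by
  choose g hg hgΨ using fun j : Fin n => exists_Psi_eq hGinvMem hGinvRight (∑ i, σ i * F i j)
  exact ⟨g, hg, by simp only [dualObjective, lossPotential, hgΨ]⟩

end Loss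

theorem stmt_12_general (p n : ℕ) (hn : 0 < n)
    (F : Fin p → Fin n → ℝ) (b : Fin p → ℝ)
    (lp lm Γinv : ℝ → ℝ)
    (hlpm : AntitoneOn lp (Set.Icc (-1) 1))
    (hlmm : MonotoneOn lm (Set.Icc (-1) 1))
    (hGinvMem : ∀ m ∈ Set.Icc (lm (-1) - lp (-1)) (lm 1 - lp 1), Γinv m ∈ Set.Icc (-1:ℝ) 1)
    (hGinvRight : ∀ m ∈ Set.Icc (lm (-1) - lp (-1)) (lm 1 - lp 1), lm (Γinv m) - lp (Γinv m) = m)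
    (ε : ℝ) (hε : 0 ≤ ε) (hZ : (ZeSet p n F b ε).Nonempty) :
    sInf {v : ℝ | ∃ g : Fin n → ℝ, (∀ j, g j ∈ Set.Icc (-1:ℝ) 1) ∧
        v = sSup {w : ℝ | ∃ z ∈ ZeSet p n F b ε, w = lossV lp lm n z g}} =
      (1 / 2) * sInf {v : ℝ | ∃ σ : Fin p → ℝ,
        v = -(∑ i, b i * σ i) + (1 / (n : ℝ)) * (∑ j, Psi lp lm Γinv (∑ i, σ i * F i j)) +
          ε * ∑ i, |σ i|} := by
  set S := {v : ℝ | ∃ g : Fin n → ℝ, (∀ j, g j ∈ Set.Icc (-1:ℝ) 1) ∧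
    v = worstCaseLoss F b ε lp lm g}
  set T := {v : ℝ | ∃ σ, v = dualObjective F b ε (fun _ => Psi lp lm Γinv) σ}
  obtain ⟨z₀, hz₀⟩ := id hZ
  have hS_bdd : BddBelow S := ⟨min (lp 1) (lm (-1)), by
    rintro _ ⟨g, hg, rfl⟩
    exact (min_le_lossV hn hlpm hlmm hz₀.1 hg).trans (lossV_le_worstCaseLoss hz₀ g)⟩
  have hT_lb : ∀ t ∈ T, 2 * sInf S ≤ t := by
    rintro _ ⟨σ, rfl⟩
    obtain ⟨g, hg, hgσ⟩ := exists_dualObjective_lossPotential_eq (F := F) (b := b) (ε := ε)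
      hGinvMem hGinvRight σ
    have := csInf_le hS_bdd ⟨g, hg, rfl⟩
    linarith [two_mul_worstCaseLoss_le (lp := lp) (lm := lm) hZ g σ]
  have hS_lb : ∀ s ∈ S, sInf T / 2 ≤ s := by
    rintro _ ⟨g, hg, rfl⟩
    refine le_of_forall_pos_le_add fun δ hδ => ?_
    obtain ⟨σ, hσ⟩ :=
      exists_dualObjective_le_two_mul_worstCaseLoss_add hZ hε g (by positivity : 0 < 2 * δ)
    have := csInf_le ⟨_, hT_lb⟩ ⟨σ, rfl⟩
    linarith [dualObjective_Psi_le (F := F) (b := b) (ε := ε) hlpm hlmm hGinvMem hGinvRight hg σ]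
  have hST := le_csInf (⟨_, 0, rfl⟩ : T.Nonempty) hT_lb
  have hTS := le_csInf (⟨_, 0, fun _ => by norm_num, rfl⟩ : S.Nonempty) hS_lb
  change sInf S = 1 / 2 * sInf T
  linarith

theorem stmt_12 (p n : ℕ) (hp : 0 < p) (hn : 0 < n)
    (F : Fin p → Fin n → ℝ) (hF : ∀ i j, F i j ∈ Set.Icc (-1:ℝ) 1) (b : Fin p → ℝ)
    (lp lm lp' lm' lp'' lm'' Γinv : ℝ → ℝ)
    (hlpc : ContinuousOn lp (Set.Icc (-1) 1))
    (hlmc : ContinuousOn lm (Set.Icc (-1) 1))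
    (hlpd : ∀ x ∈ Set.Ioo (-1:ℝ) 1, HasDerivAt lp (lp' x) x)
    (hlmd : ∀ x ∈ Set.Ioo (-1:ℝ) 1, HasDerivAt lm (lm' x) x)
    (hlpd2 : ∀ x ∈ Set.Ioo (-1:ℝ) 1, HasDerivAt lp' (lp'' x) x)
    (hlmd2 : ∀ x ∈ Set.Ioo (-1:ℝ) 1, HasDerivAt lm' (lm'' x) x)
    (hlpm : AntitoneOn lp (Set.Icc (-1) 1))
    (hlmm : MonotoneOn lm (Set.Icc (-1) 1))
    (hslope : ∀ x ∈ Set.Ioo (-1:ℝ) 1, 0 < lm' x - lp' x)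
    (hGinvMem : ∀ m ∈ Set.Icc (lm (-1) - lp (-1)) (lm 1 - lp 1), Γinv m ∈ Set.Icc (-1:ℝ) 1)
    (hGinvRight : ∀ m ∈ Set.Icc (lm (-1) - lp (-1)) (lm 1 - lp 1), lm (Γinv m) - lp (Γinv m) = m)
    (hGinvLeft : ∀ g ∈ Set.Icc (-1:ℝ) 1, Γinv (lm g - lp g) = g)
    (ε : ℝ) (hε : 0 ≤ ε) (hZ : (ZeSet p n F b ε).Nonempty) :
    sInf {v : ℝ | ∃ g : Fin n → ℝ, (∀ j, g j ∈ Set.Icc (-1:ℝ) 1) ∧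
        v = sSup {w : ℝ | ∃ z ∈ ZeSet p n F b ε, w = lossV lp lm n z g}} =
      (1 / 2) * sInf {v : ℝ | ∃ σ : Fin p → ℝ,
        v = -(∑ i, b i * σ i) + (1 / (n : ℝ)) * (∑ j, Psi lp lm Γinv (∑ i, σ i * F i j)) +
          ε * ∑ i, |σ i|} :=
  stmt_12_general p n hn F b lp lm Γinv hlpm hlmm hGinvMem hGinvRight ε hε hZ
end
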